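/- arXiv:1304.4894 — 3 statements merged into one kernel-verified Lean document; each statement's English description precedes it below -/
import Mathlib

section
/- Let 0 < u < v, s ∈ (0,1] and q ≥ 1. Then |(s-1)·L_s(u,v)^s + A(u,v)^s| ≤ (s^q·A(u,v)^{q-1}/((s+1)(s+2)·2^q))^{1/q}·(((s+1)u+v)·A(u,v)^{(s-1)q} + ((s+1)v+u)·v^{(s-1)q})^{1/q} + (s^q·A(u,v)^{q-1}/((s+1)(s+2)·2^q))^{1/q}·(((s+1)v+u)·A(u,v)^{(s-1)q} + ((s+1)u+v)·u^{(s-1)q})^{1/q}. -/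
/-!
Writing `A = (u + v) / 2` and `J(x, y) = ∫₀¹ (t x + (1 - t) y) (t x + (1 - t) A) ^ (s - 1) dt`,
an explicit antiderivative shows that the left-hand side (without the absolute value) equals
`s / 2 * (J(v, u) + J(u, v))`, a sum of nonnegative terms. Each `J(x, y)` is estimated by the
weighted power-mean (Hölder) inequality with weight `t x + (1 - t) y`, of total mass `A`;
the resulting integral of `(t x + (1 - t) A) ^ ((s - 1) q)` is bounded through the convexity of
`z ^ ((s - 1) q)` combined with `t ≤ t ^ s`, which leaves integrals of the form
`∫₀¹ t ^ s (t a + (1 - t) b) dt` that are computed exactly.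
-/

open Set Real intervalIntegral
open MeasureTheory (volume)

lemma lerp_pos {a b t : ℝ} (ha : 0 < a) (hb : 0 < b) (ht : t ∈ Icc (0:ℝ) 1) :
    0 < t * a + (1 - t) * b := by
  obtain ⟨h0, h1⟩ := ht
  nlinarith [mul_nonneg h0 ha.le, mul_nonneg (sub_nonneg.2 h1) hb.le]

lemma integral_lerp_mul_rpow_lerp_nonneg {x y b p : ℝ} (hx : 0 < x) (hy : 0 ≤ y) (hb : 0 < b) :
    0 ≤ ∫ t in (0:ℝ)..1, (t * x + (1 - t) * y) * (t * x + (1 - t) * b) ^ p :=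
  integral_nonneg zero_le_one fun _ ht => mul_nonneg
    (add_nonneg (mul_nonneg ht.1 hx.le) (mul_nonneg (sub_nonneg.2 ht.2) hy))
    (rpow_pos_of_pos (lerp_pos hx hb ht) p).le

lemma integral_rpow_mul_lerp {s : ℝ} (hs : -1 < s) (a b : ℝ) :
    ∫ t in (0:ℝ)..1, t ^ s * (t * a + (1 - t) * b)
      = ((s + 1) * a + b) / ((s + 1) * (s + 2)) := by
  have hs1 : s + 1 ≠ 0 := by linarith
  have hs2 : s + 2 ≠ 0 := by linarith
  have hsplit : ∀ t ∈ uIcc (0:ℝ) 1, t ^ s * (t * a + (1 - t) * b)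
      = (a - b) * t ^ (s + 1) + b * t ^ s := by
    intro t ht
    rw [uIcc_of_le zero_le_one] at ht
    rw [rpow_add_one' ht.1 hs1]
    ring
  rw [integral_congr hsplit, integral_add, integral_const_mul, integral_const_mul,
    integral_rpow (Or.inl (by linarith)), integral_rpow (Or.inl hs), add_assoc, one_add_one_eq_two]
  · simp only [one_rpow, zero_rpow hs1, zero_rpow hs2]
    field_simp
    ring
  · exact (intervalIntegrable_rpow' (by linarith)).const_mul _
  · exact (intervalIntegrable_rpow' hs).const_mul _

lemma integral_one_sub_rpow_mul_lerp {s : ℝ} (hs : -1 < s) (a b : ℝ) :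
    ∫ t in (0:ℝ)..1, (1 - t) ^ s * (t * a + (1 - t) * b)
      = ((s + 1) * b + a) / ((s + 1) * (s + 2)) := by
  have h := integral_comp_sub_left (fun t : ℝ => t ^ s * (t * b + (1 - t) * a))
    (a := 0) (b := 1) 1
  simp only [sub_sub_cancel, sub_self, sub_zero, integral_rpow_mul_lerp hs] at h
  rw [← h]
  congr 1 with t
  ring

lemma integral_lerp (a b : ℝ) : ∫ t in (0:ℝ)..1, (t * a + (1 - t) * b) = (a + b) / 2 := by
  simpa using integral_rpow_mul_lerp (s := 0) (by norm_num) a b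

lemma integral_lerp_mul_rpow_lerp_mean_eq {x y s : ℝ} (hx : 0 < x) (hy : 0 < y) (hxy : x ≠ y)
    (hs : s ≠ 0) (hs' : s + 1 ≠ 0) :
    ∫ t in (0:ℝ)..1, (t * x + (1 - t) * y) * (t * x + (1 - t) * ((x + y) / 2)) ^ (s - 1)
      = (2 * (x ^ (s + 1) - ((x + y) / 2) ^ (s + 1)) / (s + 1)
          - x * (x ^ s - ((x + y) / 2) ^ s) / s) / ((x - y) / 2) := by
  set A := (x + y) / 2 with hA
  have hc : (x - y) / 2 ≠ 0 := by intro h; apply hxy; linarith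
  have hz : ∀ t ∈ uIcc (0:ℝ) 1, 0 < t * x + (1 - t) * A := by
    rw [uIcc_of_le zero_le_one]
    exact fun t ht => lerp_pos hx (by positivity) ht
  -- with `z = t * x + (1 - t) * A` the integrand is `(2 z - x) * z ^ (s - 1)`
  have hF : ∀ t ∈ uIcc (0:ℝ) 1, HasDerivAt
      (fun t => 2 / ((s + 1) * ((x - y) / 2)) * (t * x + (1 - t) * A) ^ (s + 1)
        - x / (s * ((x - y) / 2)) * (t * x + (1 - t) * A) ^ s)
      ((t * x + (1 - t) * y) * (t * x + (1 - t) * A) ^ (s - 1)) t := by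
    intro t ht
    have hzt := (hz t ht).ne'
    have hlin : HasDerivAt (fun t => t * x + (1 - t) * A) ((x - y) / 2) t := by
      refine (((hasDerivAt_id t).mul_const x).add
        (((hasDerivAt_id t).const_sub 1).mul_const A)).congr_deriv ?_
      rw [hA]; ring
    refine (((hlin.rpow_const (p := s + 1) (Or.inl hzt)).const_mul _).sub
      ((hlin.rpow_const (p := s) (Or.inl hzt)).const_mul _)).congr_deriv ?_
    have hlerp : t * x + (1 - t) * y = 2 * (t * x + (1 - t) * A) - x := by rw [hA]; ring
    rw [add_sub_cancel_right, hlerp, rpow_sub_one hzt]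
    generalize t * x + (1 - t) * A = z at hzt ⊢
    field_simp
  have hint : IntervalIntegrable
      (fun t => (t * x + (1 - t) * y) * (t * x + (1 - t) * A) ^ (s - 1)) volume 0 1 :=
    ContinuousOn.intervalIntegrable <| (by fun_prop : Continuous _).continuousOn.mul <|
      ContinuousOn.rpow_const (by fun_prop) fun t ht => Or.inl (hz t ht).ne'
  rw [integral_eq_sub_of_hasDerivAt hF hint]
  simp only [one_mul, sub_self, zero_mul, add_zero, zero_add, sub_zero]
  field_simp
  ring

lemma sub_one_mul_logMean_add_rpow_mean_eq {u v s : ℝ} (hu : 0 < u) (hv : 0 < v) (huv : u ≠ v)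
    (hs : s ≠ 0) (hs' : s + 1 ≠ 0) :
    (s - 1) * ((v ^ (s + 1) - u ^ (s + 1)) / ((s + 1) * (v - u))) + ((u + v) / 2) ^ s
      = s / 2 * (∫ t in (0:ℝ)..1,
            (t * v + (1 - t) * u) * (t * v + (1 - t) * ((u + v) / 2)) ^ (s - 1))
        + s / 2 * ∫ t in (0:ℝ)..1,
            (t * u + (1 - t) * v) * (t * u + (1 - t) * ((u + v) / 2)) ^ (s - 1) := by
  have hvu := integral_lerp_mul_rpow_lerp_mean_eq hv hu huv.symm hs hs'
  rw [add_comm v u] at hvu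
  rw [hvu, integral_lerp_mul_rpow_lerp_mean_eq hu hv huv hs hs',
    rpow_add_one hu.ne', rpow_add_one hv.ne', rpow_add_one (by positivity : (u + v) / 2 ≠ 0)]
  have : v - u ≠ 0 := sub_ne_zero.2 huv.symm
  have : u - v ≠ 0 := sub_ne_zero.2 huv
  field_simp
  ring

-- `x ^ p` is decreasing for `p ≤ 0`, so convexity follows from weighted AM-GM applied twice
lemma convexOn_rpow_of_nonpos {p : ℝ} (hp : p ≤ 0) :
    ConvexOn ℝ (Ioi 0) fun x : ℝ => x ^ p := by
  refine ⟨convex_Ioi 0, fun x (hx : 0 < x) y (hy : 0 < y) a b ha hb hab => ?_⟩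
  simp only [smul_eq_mul]
  calc (a * x + b * y) ^ p
      ≤ (x ^ a * y ^ b) ^ p := rpow_le_rpow_of_nonpos (by positivity)
        (geom_mean_le_arith_mean2_weighted ha hb hx.le hy.le hab) hp
    _ = (x ^ p) ^ a * (y ^ p) ^ b := by
      rw [mul_rpow (by positivity) (by positivity), ← rpow_mul hx.le, ← rpow_mul hy.le,
        mul_comm a, mul_comm b, rpow_mul hx.le, rpow_mul hy.le]
    _ ≤ a * x ^ p + b * y ^ p :=
      geom_mean_le_arith_mean2_weighted ha hb (by positivity) (by positivity) hab

lemma rpow_lerp_le {a b t p s : ℝ} (ha : 0 < a) (hb : 0 < b) (ht : t ∈ Icc (0:ℝ) 1)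
    (hp : p ≤ 0) (hs : s ≤ 1) :
    (t * a + (1 - t) * b) ^ p ≤ t ^ s * a ^ p + (1 - t) ^ s * b ^ p := by
  obtain ⟨h0, h1⟩ := ht
  calc (t * a + (1 - t) * b) ^ p
      ≤ t * a ^ p + (1 - t) * b ^ p :=
        (convexOn_rpow_of_nonpos hp).2 ha hb h0 (sub_nonneg.2 h1) (by ring)
    _ ≤ t ^ s * a ^ p + (1 - t) ^ s * b ^ p := by
      gcongr
      · exact self_le_rpow_of_le_one h0 h1 hs
      · exact self_le_rpow_of_le_one (sub_nonneg.2 h1) (by linarith) hs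

lemma integral_lerp_mul_rpow_lerp_le {x y b p s : ℝ} (hx : 0 < x) (hy : 0 ≤ y) (hb : 0 < b)
    (hp : p ≤ 0) (hs0 : 0 ≤ s) (hs1 : s ≤ 1) :
    ∫ t in (0:ℝ)..1, (t * x + (1 - t) * y) * (t * x + (1 - t) * b) ^ p
      ≤ (((s + 1) * x + y) * x ^ p + ((s + 1) * y + x) * b ^ p) / ((s + 1) * (s + 2)) := by
  have hlerp : ContinuousOn (fun t : ℝ => t * x + (1 - t) * y) (uIcc 0 1) := by fun_prop
  have hts : ContinuousOn (fun t : ℝ => t ^ s * (t * x + (1 - t) * y)) (uIcc 0 1) :=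
    (continuousOn_id.rpow_const fun _ _ => Or.inr hs0).mul hlerp
  have hts' : ContinuousOn (fun t : ℝ => (1 - t) ^ s * (t * x + (1 - t) * y)) (uIcc 0 1) :=
    ((continuousOn_const.sub continuousOn_id).rpow_const fun _ _ => Or.inr hs0).mul hlerp
  calc ∫ t in (0:ℝ)..1, (t * x + (1 - t) * y) * (t * x + (1 - t) * b) ^ p
      ≤ ∫ t in (0:ℝ)..1, x ^ p * (t ^ s * (t * x + (1 - t) * y))
          + b ^ p * ((1 - t) ^ s * (t * x + (1 - t) * y)) := by
        refine integral_mono_on zero_le_one ?_ ?_ fun t ht => ?_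
        · refine ContinuousOn.intervalIntegrable (hlerp.mul (ContinuousOn.rpow_const
            (by fun_prop) fun t ht => Or.inl (lerp_pos hx hb ?_).ne'))
          rwa [uIcc_of_le zero_le_one] at ht
        · exact ((continuousOn_const.mul hts).add (continuousOn_const.mul hts')).intervalIntegrable
        · have hw : 0 ≤ t * x + (1 - t) * y :=
            add_nonneg (mul_nonneg ht.1 hx.le) (mul_nonneg (sub_nonneg.2 ht.2) hy)
          calc (t * x + (1 - t) * y) * (t * x + (1 - t) * b) ^ p
              ≤ (t * x + (1 - t) * y) * (t ^ s * x ^ p + (1 - t) ^ s * b ^ p) := by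
                gcongr; exact rpow_lerp_le hx hb ht hp hs1
            _ = _ := by ring
    _ = _ := by
        rw [integral_add (hts.intervalIntegrable.const_mul _) (hts'.intervalIntegrable.const_mul _),
          integral_const_mul, integral_const_mul, integral_rpow_mul_lerp (by linarith),
          integral_one_sub_rpow_mul_lerp (by linarith)]
        ring

lemma tangent_le_rpow {c x q : ℝ} (hc : 0 < c) (hx : 0 ≤ x) (hq : 1 ≤ q) :
    c ^ q + q * c ^ (q - 1) * (x - c) ≤ x ^ q := by
  have h := one_add_mul_self_le_rpow_one_add (s := x / c - 1)
    (by linarith [div_nonneg hx hc.le]) hq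
  rw [add_sub_cancel, div_rpow hx hc.le, le_div_iff₀ (by positivity)] at h
  calc c ^ q + q * c ^ (q - 1) * (x - c) = (1 + q * (x / c - 1)) * c ^ q := by
        rw [rpow_sub_one hc.ne']
        field_simp
    _ ≤ x ^ q := h

-- Jensen's inequality for `z ^ q` with weight `w`, via the tangent line at the weighted mean of `g`
lemma integral_mul_le_rpow_mul_integral_mul_rpow {w g : ℝ → ℝ} {a b q : ℝ} (hab : a ≤ b)
    (hq : 1 ≤ q) (hw : ∀ t ∈ Icc a b, 0 ≤ w t) (hg : ∀ t ∈ Icc a b, 0 ≤ g t)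
    (hW : 0 < ∫ t in a..b, w t) (hwgq : IntervalIntegrable (fun t => w t * g t ^ q) volume a b) :
    ∫ t in a..b, w t * g t
      ≤ (∫ t in a..b, w t) ^ ((q - 1) / q) * (∫ t in a..b, w t * g t ^ q) ^ (1 / q) := by
  set W := ∫ t in a..b, w t
  set I := ∫ t in a..b, w t * g t
  set J := ∫ t in a..b, w t * g t ^ q
  have hJ : 0 ≤ J :=
    integral_nonneg hab fun t ht => mul_nonneg (hw t ht) (rpow_nonneg (hg t ht) q)
  rcases le_or_gt I 0 with hI | hI
  · exact hI.trans (by positivity)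
  have hwi := intervalIntegrable_of_integral_ne_zero hW.ne'
  have hwg := intervalIntegrable_of_integral_ne_zero hI.ne'
  set c := I / W
  have hc : 0 < c := div_pos hI hW
  have hIc : I = c * W := (div_mul_cancel₀ _ hW.ne').symm
  have hcW : c ^ q * W ≤ J := calc
    c ^ q * W
        = ∫ t in a..b, (c ^ q - q * c ^ (q - 1) * c) * w t + q * c ^ (q - 1) * (w t * g t) := by
        rw [integral_add (hwi.const_mul _) (hwg.const_mul _), integral_const_mul,
          integral_const_mul]
        change _ = _ * W + _ * I
        rw [hIc]
        ring
    _ ≤ J := integral_mono_on hab ((hwi.const_mul _).add (hwg.const_mul _)) hwgq fun t ht => by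
        have := mul_le_mul_of_nonneg_left (tangent_le_rpow hc (hg t ht) hq) (hw t ht)
        linarith
  have hq0 : q ≠ 0 := by positivity
  calc I = (c ^ q * W) ^ (1 / q) * W ^ ((q - 1) / q) := by
        rw [mul_rpow (by positivity) hW.le, ← rpow_mul hc.le, mul_one_div_cancel hq0, rpow_one,
          mul_assoc, ← rpow_add hW, ← add_div, add_sub_cancel, div_self hq0, rpow_one, hIc]
    _ ≤ J ^ (1 / q) * W ^ ((q - 1) / q) := by gcongr
    _ = W ^ ((q - 1) / q) * J ^ (1 / q) := mul_comm _ _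

lemma mul_integral_lerp_mul_rpow_lerp_mean_le {x y q s : ℝ} (hx : 0 < x) (hy : 0 < y)
    (hq : 1 ≤ q) (hs0 : 0 < s) (hs1 : s ≤ 1) :
    s / 2 * ∫ t in (0:ℝ)..1,
        (t * x + (1 - t) * y) * (t * x + (1 - t) * ((x + y) / 2)) ^ (s - 1)
      ≤ (s ^ q * ((x + y) / 2) ^ (q - 1) / ((s + 1) * (s + 2) * 2 ^ q)) ^ (1 / q) *
          (((s + 1) * y + x) * ((x + y) / 2) ^ ((s - 1) * q)
            + ((s + 1) * x + y) * x ^ ((s - 1) * q)) ^ (1 / q) := by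
  set A := (x + y) / 2
  have hA : 0 < A := by positivity
  have hq0 : q ≠ 0 := by positivity
  have hz : ∀ t ∈ Icc (0:ℝ) 1, 0 < t * x + (1 - t) * A := fun t ht => lerp_pos hx hA ht
  have hw : ∀ t ∈ Icc (0:ℝ) 1, 0 ≤ t * x + (1 - t) * y := fun t ht => (lerp_pos hx hy ht).le
  have hpow : ∫ t in (0:ℝ)..1, (t * x + (1 - t) * y) * ((t * x + (1 - t) * A) ^ (s - 1)) ^ q
      = ∫ t in (0:ℝ)..1, (t * x + (1 - t) * y) * (t * x + (1 - t) * A) ^ ((s - 1) * q) := by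
    refine integral_congr fun t ht => ?_
    rw [uIcc_of_le zero_le_one] at ht
    simp only [rpow_mul (hz t ht).le]
  have hgq : ContinuousOn (fun t => ((t * x + (1 - t) * A) ^ (s - 1)) ^ q) (uIcc 0 1) := by
    rw [uIcc_of_le zero_le_one]
    exact ContinuousOn.rpow_const (ContinuousOn.rpow_const (by fun_prop)
      fun t ht => Or.inl (hz t ht).ne') fun t ht => Or.inl (rpow_pos_of_pos (hz t ht) _).ne'
  have hholder := integral_mul_le_rpow_mul_integral_mul_rpow
    (g := fun t => (t * x + (1 - t) * A) ^ (s - 1)) zero_le_one hq hw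
    (fun t ht => (rpow_pos_of_pos (hz t ht) _).le) (by rw [integral_lerp]; exact hA)
    (((by fun_prop : Continuous _).continuousOn.mul hgq).intervalIntegrable)
  rw [integral_lerp, hpow] at hholder
  have hjensen := integral_lerp_mul_rpow_lerp_le (p := (s - 1) * q) (s := s) hx hy.le hA
    (mul_nonpos_of_nonpos_of_nonneg (by linarith) (by linarith)) hs0.le hs1
  calc s / 2 * ∫ t in (0:ℝ)..1, (t * x + (1 - t) * y) * (t * x + (1 - t) * A) ^ (s - 1)
      ≤ s / 2 * (A ^ ((q - 1) / q) * ((((s + 1) * x + y) * x ^ ((s - 1) * q)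
          + ((s + 1) * y + x) * A ^ ((s - 1) * q)) / ((s + 1) * (s + 2))) ^ (1 / q)) := by
        gcongr
        exact hholder.trans (by gcongr; exact integral_lerp_mul_rpow_lerp_nonneg hx hy.le hA)
    _ = ((s / 2) ^ q * A ^ (q - 1) * ((((s + 1) * x + y) * x ^ ((s - 1) * q)
          + ((s + 1) * y + x) * A ^ ((s - 1) * q)) / ((s + 1) * (s + 2)))) ^ (1 / q) := by
        rw [mul_rpow (by positivity) (by positivity), mul_rpow (by positivity) (by positivity),
          one_div, rpow_rpow_inv (by positivity) hq0, ← rpow_mul hA.le, div_eq_mul_inv (q - 1),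
          mul_assoc]
    _ = _ := by
        rw [← mul_rpow (by positivity) (by positivity), div_rpow (by positivity) zero_le_two]
        congr 1
        field_simp
        ring

theorem stmt_15 (u v q s : ℝ) (hu : 0 < u) (huv : u < v)
    (hq : 1 ≤ q) (hs0 : 0 < s) (hs1 : s ≤ 1) :
    |(s - 1) * ((v ^ (s + 1) - u ^ (s + 1)) / ((s + 1) * (v - u))) + ((u + v) / 2) ^ s|
      ≤ (s ^ q * ((u + v) / 2) ^ (q - 1) / ((s + 1) * (s + 2) * 2 ^ q)) ^ (1 / q) *
          (((s + 1) * u + v) * ((u + v) / 2) ^ ((s - 1) * q)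
            + ((s + 1) * v + u) * v ^ ((s - 1) * q)) ^ (1 / q)
        + (s ^ q * ((u + v) / 2) ^ (q - 1) / ((s + 1) * (s + 2) * 2 ^ q)) ^ (1 / q) *
          (((s + 1) * v + u) * ((u + v) / 2) ^ ((s - 1) * q)
            + ((s + 1) * u + v) * u ^ ((s - 1) * q)) ^ (1 / q) := by
  have hv : 0 < v := hu.trans huv
  have hA : 0 < (u + v) / 2 := by positivity
  rw [sub_one_mul_logMean_add_rpow_mean_eq hu hv huv.ne hs0.ne' (by linarith), abs_of_nonneg
    (add_nonneg (mul_nonneg (by positivity) (integral_lerp_mul_rpow_lerp_nonneg hv hu.le hA))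
      (mul_nonneg (by positivity) (integral_lerp_mul_rpow_lerp_nonneg hu hv.le hA)))]
  have hvu := mul_integral_lerp_mul_rpow_lerp_mean_le hv hu hq hs0 hs1
  rw [add_comm v u] at hvu
  exact add_le_add hvu (mul_integral_lerp_mul_rpow_lerp_mean_le hu hv hq hs0 hs1)
end

section
/- Let J = [0,∞) and let f : J → ℝ be differentiable on the interior of J with f' integrable on [u,v], where u, v ∈ J and 0 < u < v. Let q > 1 and p satisfy 1/p + 1/q = 1, and let s ∈ (0,1]. If |f'|^q is s-concave in the second sense on [u,v], then for every x ∈ [u,v]: |((v-x)(v·f(v) - u·f(x)) + (x-u)(v·f(x) - u·f(u)))/(v-u)² - (1/(v-u))·∫_u^v f(μ) dμ| ≤ (2^{(s-1)/q}·L_p(u,v)/(v-u)²)·[(v-x)²·|f'((x+v)/2)| + (x-u)²·|f'((x+u)/2)|]. -/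
/-!
Integrating by parts on `[u, x]` and `[x, v]` against affine weights, the left-hand side becomes
`(I₁ + I₂) / (v - u)²`, where on a subinterval `[a, b]` the weight of `Iᵢ` runs linearly from
`u (b - a)` to `v (b - a)`. Hölder's inequality bounds each `Iᵢ`: the `L^p` norm of the weight is
`(b - a)^(1 + 1/p) L_p(u, v)`, and the `L^q` norm of `f'` is controlled by the left
Hermite–Hadamard inequality `∫_a^b g ≤ 2^(s-1) (b - a) g((a + b)/2)` for the `s`-concave
`g = |f'|^q`. Midpoint `s`-concavity also bounds `|f'|`, which puts `f'` in `L^q`.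
-/

open MeasureTheory Set
open scoped ENNReal

/-- `s`-concavity in the second sense; the nonnegativity of `g` is assumed separately where needed. -/
def SConcaveOn (s : ℝ) (S : Set ℝ) (g : ℝ → ℝ) : Prop :=
  ∀ a ∈ S, ∀ b ∈ S, ∀ t ∈ Icc (0 : ℝ) 1, t ^ s * g a + (1 - t) ^ s * g b ≤ g (t * a + (1 - t) * b)

namespace SConcaveOn

variable {s : ℝ} {S T : Set ℝ} {g : ℝ → ℝ} {a b x y : ℝ}

theorem subset (h : SConcaveOn s S g) (hTS : T ⊆ S) : SConcaveOn s T g :=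
  fun a ha b hb t ht => h a (hTS ha) b (hTS hb) t ht

theorem add_le_two_rpow_mul_midpoint (h : SConcaveOn s S g) (hx : x ∈ S) (hy : y ∈ S) :
    g x + g y ≤ 2 ^ s * g ((x + y) / 2) := by
  have hmid := h x hx y hy (1 / 2) ⟨by norm_num, by norm_num⟩
  rw [show (1 : ℝ) - 1 / 2 = 1 / 2 by norm_num, ← mul_add,
    show 1 / 2 * x + 1 / 2 * y = (x + y) / 2 by ring] at hmid
  have h2 : (2 : ℝ) ^ s * (1 / 2) ^ s = 1 := by
    rw [← Real.mul_rpow (by norm_num) (by norm_num)]; norm_num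
  calc g x + g y = 2 ^ s * ((1 / 2) ^ s * (g x + g y)) := by rw [← mul_assoc, h2, one_mul]
    _ ≤ 2 ^ s * g ((x + y) / 2) := mul_le_mul_of_nonneg_left hmid (by positivity)

theorem le_two_rpow_mul_midpoint (h : SConcaveOn s (Icc a b) g) (hg : ∀ y ∈ Icc a b, 0 ≤ g y)
    (hx : x ∈ Icc a b) : g x ≤ 2 ^ s * g ((a + b) / 2) := by
  have hx' : a + b - x ∈ Icc a b := ⟨by linarith [hx.2], by linarith [hx.1]⟩
  have := h.add_le_two_rpow_mul_midpoint hx hx'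
  rw [add_sub_cancel] at this
  linarith [hg _ hx']

/-- The left Hermite–Hadamard inequality for `s`-concave functions. -/
theorem integral_le (h : SConcaveOn s (Icc a b) g) (hab : a ≤ b)
    (hg : IntervalIntegrable g volume a b) :
    ∫ x in a..b, g x ≤ 2 ^ (s - 1) * (b - a) * g ((a + b) / 2) := by
  have hg' : IntervalIntegrable (fun x => g (a + b - x)) volume a b := by
    simpa using (hg.comp_sub_left (a + b)).symm
  have hrefl : ∫ x in a..b, g (a + b - x) = ∫ x in a..b, g x := by
    rw [intervalIntegral.integral_comp_sub_left g (a + b), add_sub_cancel_right,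
      add_sub_cancel_left]
  have hsum : ∫ x in a..b, (g x + g (a + b - x)) ≤ ∫ _ in a..b, 2 ^ s * g ((a + b) / 2) :=
    intervalIntegral.integral_mono_on hab (hg.add hg') intervalIntegrable_const fun x hx => by
      simpa using h.add_le_two_rpow_mul_midpoint hx
        (show a + b - x ∈ Icc a b from ⟨by linarith [hx.2], by linarith [hx.1]⟩)
  rw [intervalIntegral.integral_add hg hg', hrefl, intervalIntegral.integral_const,
    smul_eq_mul] at hsum
  rw [Real.rpow_sub two_pos, Real.rpow_one]
  linarith

theorem memLp_of_abs_rpow {q : ℝ} (hq : 0 < q) (h : SConcaveOn s (Icc a b) fun x => |g x| ^ q)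
    (hg : AEStronglyMeasurable g (volume.restrict (Ioc a b))) (r : ℝ≥0∞) :
    MemLp g r (volume.restrict (Ioc a b)) := by
  refine MemLp.of_bound hg ((2 ^ s * |g ((a + b) / 2)| ^ q) ^ q⁻¹)
    ((ae_restrict_iff' measurableSet_Ioc).2 (ae_of_all _ fun x hx => ?_))
  rw [Real.norm_eq_abs, Real.le_rpow_inv_iff_of_pos (abs_nonneg _) (by positivity) hq]
  exact h.le_two_rpow_mul_midpoint (fun _ _ => by positivity) (Ioc_subset_Icc_self hx)

end SConcaveOn

theorem abs_intervalIntegral_mul_le_Lp_mul_Lq {p q : ℝ} (hpq : p.HolderConjugate q) {f g : ℝ → ℝ}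
    {a b : ℝ} (hab : a ≤ b) (hf : MemLp f (ENNReal.ofReal p) (volume.restrict (Ioc a b)))
    (hg : MemLp g (ENNReal.ofReal q) (volume.restrict (Ioc a b))) :
    |∫ x in a..b, f x * g x|
      ≤ (∫ x in a..b, |f x| ^ p) ^ (1 / p) * (∫ x in a..b, |g x| ^ q) ^ (1 / q) := by
  simp only [intervalIntegral.integral_of_le hab]
  calc |∫ x in Ioc a b, f x * g x| ≤ ∫ x in Ioc a b, |f x| * |g x| := by
        simpa only [Real.norm_eq_abs, abs_mul] using
          norm_integral_le_integral_norm (fun x => f x * g x)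
    _ ≤ _ := by simpa only [Real.norm_eq_abs] using integral_mul_norm_le_Lp_mul_Lq hpq hf hg

theorem integral_affine_rpow {u v a b p : ℝ} (hu : 0 ≤ u) (huv : u < v) (hab : a ≤ b)
    (hp : -1 < p) :
    ∫ x in a..b, ((v - u) * (x - a) + u * (b - a)) ^ p
      = (b - a) ^ (p + 1) * ((v ^ (p + 1) - u ^ (p + 1)) / ((p + 1) * (v - u))) := by
  have h := intervalIntegral.integral_comp_mul_add (a := a) (b := b) (fun y : ℝ => y ^ p)
    (sub_ne_zero.2 huv.ne') (u * (b - a) - (v - u) * a)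
  have hlin : ∀ x, (v - u) * (x - a) + u * (b - a) = (v - u) * x + (u * (b - a) - (v - u) * a) :=
    fun x => by ring
  simp only [hlin, h, integral_rpow (Or.inl hp), smul_eq_mul]
  rw [show (v - u) * b + (u * (b - a) - (v - u) * a) = v * (b - a) by ring,
    show (v - u) * a + (u * (b - a) - (v - u) * a) = u * (b - a) by ring,
    Real.mul_rpow (hu.trans huv.le) (sub_nonneg.2 hab), Real.mul_rpow hu (sub_nonneg.2 hab)]
  have : p + 1 ≠ 0 := by linarith
  have : v - u ≠ 0 := sub_ne_zero.2 huv.ne'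
  field_simp

theorem integral_affine_mul_deriv {f f' : ℝ → ℝ} {a b : ℝ}
    (hf : ∀ x ∈ uIcc a b, HasDerivAt f (f' x) x) (hf' : IntervalIntegrable f' volume a b)
    (α β : ℝ) :
    ∫ x in a..b, (α * (x - a) + β) * f' x
      = (α * (b - a) + β) * f b - β * f a - α * ∫ x in a..b, f x := by
  rw [intervalIntegral.integral_mul_deriv_eq_deriv_mul (u' := fun _ => α)
    (fun x _ => by simpa using (((hasDerivAt_id x).sub_const a).const_mul α).add_const β)
    hf intervalIntegrable_const hf', intervalIntegral.integral_const_mul]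
  simp

theorem abs_integral_affine_mul_le {f' : ℝ → ℝ} {u v a b p q s : ℝ} (hpq : p.HolderConjugate q)
    (hu : 0 ≤ u) (huv : u < v) (hab : a ≤ b)
    (hconc : SConcaveOn s (Icc a b) fun x => |f' x| ^ q)
    (hmeas : AEStronglyMeasurable f' (volume.restrict (Ioc a b))) :
    |∫ x in a..b, ((v - u) * (x - a) + u * (b - a)) * f' x|
      ≤ 2 ^ ((s - 1) / q) * ((v ^ (p + 1) - u ^ (p + 1)) / ((p + 1) * (v - u))) ^ (1 / p)
        * (b - a) ^ 2 * |f' ((a + b) / 2)| := by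
  set K : ℝ → ℝ := fun x => (v - u) * (x - a) + u * (b - a)
  set L := (v ^ (p + 1) - u ^ (p + 1)) / ((p + 1) * (v - u))
  set G := |f' ((a + b) / 2)|
  have hba : 0 ≤ b - a := sub_nonneg.2 hab
  have hL : 0 ≤ L := div_nonneg (sub_nonneg.2 (Real.rpow_le_rpow hu huv.le
    (by linarith [hpq.pos]))) (mul_nonneg (by linarith [hpq.pos]) (sub_nonneg.2 huv.le))
  have hK : ∀ x ∈ Icc a b, K x ∈ Icc 0 (v * (b - a)) := fun x hx =>
    ⟨by nlinarith [hx.1], by nlinarith [hx.2]⟩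
  have hKLp : MemLp K (ENNReal.ofReal p) (volume.restrict (Ioc a b)) :=
    memLp_of_bounded ((ae_restrict_iff' measurableSet_Ioc).2
      (ae_of_all _ fun x hx => hK x (Ioc_subset_Icc_self hx)))
      (by fun_prop : Continuous K).aestronglyMeasurable _
  have hfLq := hconc.memLp_of_abs_rpow hpq.symm.pos hmeas (ENNReal.ofReal q)
  have hKp : ∫ x in a..b, |K x| ^ p = (b - a) ^ (p + 1) * L := by
    rw [intervalIntegral.integral_congr fun x hx =>
      congrArg (· ^ p) (abs_of_nonneg (hK x (uIcc_of_le hab ▸ hx)).1)]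
    exact integral_affine_rpow hu huv hab (by linarith [hpq.pos])
  have hfq : ∫ x in a..b, |f' x| ^ q ≤ 2 ^ (s - 1) * (b - a) * G ^ q := by
    have hint : Integrable (fun x => |f' x| ^ q) (volume.restrict (Ioc a b)) := by
      simpa [ENNReal.toReal_ofReal hpq.symm.nonneg] using hfLq.integrable_norm_rpow'
    exact hconc.integral_le hab ((intervalIntegrable_iff_integrableOn_Ioc_of_le hab).2 hint)
  have hexp : (p + 1) * (1 / p) + 1 / q = 2 := by
    rw [add_mul, one_mul, mul_one_div_cancel hpq.ne_zero, add_assoc, one_div, one_div,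
      hpq.inv_add_inv_eq_one]
    norm_num
  have hpow : (b - a) ^ ((p + 1) * (1 / p)) * (b - a) ^ (1 / q) = (b - a) ^ 2 := by
    rw [← Real.rpow_add' hba (by rw [hexp]; norm_num), hexp]
    norm_cast
  calc |∫ x in a..b, K x * f' x|
      ≤ (∫ x in a..b, |K x| ^ p) ^ (1 / p) * (∫ x in a..b, |f' x| ^ q) ^ (1 / q) :=
        abs_intervalIntegral_mul_le_Lp_mul_Lq hpq hab hKLp hfLq
    _ ≤ ((b - a) ^ (p + 1) * L) ^ (1 / p) * (2 ^ (s - 1) * (b - a) * G ^ q) ^ (1 / q) := by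
        rw [hKp]
        exact mul_le_mul_of_nonneg_left (Real.rpow_le_rpow
          (intervalIntegral.integral_nonneg hab fun x _ => by positivity) hfq
          hpq.symm.one_div_nonneg) (Real.rpow_nonneg (mul_nonneg (by positivity) hL) _)
    _ = 2 ^ ((s - 1) / q) * L ^ (1 / p) * (b - a) ^ 2 * G := by
        rw [Real.mul_rpow (by positivity) hL, Real.mul_rpow (by positivity) (by positivity),
          Real.mul_rpow (by positivity) hba, ← Real.rpow_mul hba, ← Real.rpow_mul two_pos.le,
          ← Real.rpow_mul (abs_nonneg _), mul_one_div_cancel hpq.symm.ne_zero, Real.rpow_one,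
          ← hpow, mul_one_div (s - 1)]
        ring

theorem abs_mul_sub_mul_integral_le {f f' : ℝ → ℝ} {u v a b p q s : ℝ}
    (hpq : p.HolderConjugate q) (hu : 0 ≤ u) (huv : u < v) (hab : a ≤ b)
    (hf : ∀ x ∈ Icc a b, HasDerivAt f (f' x) x) (hf' : IntervalIntegrable f' volume a b)
    (hconc : SConcaveOn s (Icc a b) fun x => |f' x| ^ q) :
    |(b - a) * (v * f b - u * f a) - (v - u) * ∫ x in a..b, f x|
      ≤ 2 ^ ((s - 1) / q) * ((v ^ (p + 1) - u ^ (p + 1)) / ((p + 1) * (v - u))) ^ (1 / p)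
        * (b - a) ^ 2 * |f' ((a + b) / 2)| := by
  have hibp := integral_affine_mul_deriv (uIcc_of_le hab ▸ hf) hf' (v - u) (u * (b - a))
  rw [show (v - u) * (b - a) + u * (b - a) = v * (b - a) by ring] at hibp
  rw [show (b - a) * (v * f b - u * f a) = v * (b - a) * f b - u * (b - a) * f a by ring, ← hibp]
  exact abs_integral_affine_mul_le hpq hu huv hab hconc hf'.1.aestronglyMeasurable

theorem stmt_16_general (f f' : ℝ → ℝ) (u v p q s : ℝ) (hu : 0 < u) (huv : u < v)
    (hq : 1 < q) (hpq : 1 / p + 1 / q = 1)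
    (hderiv : ∀ y ∈ interior (Set.Ici (0:ℝ)), HasDerivAt f (f' y) y)
    (hint : IntervalIntegrable f' MeasureTheory.volume u v)
    (hsconc : ∀ a ∈ Set.Icc u v, ∀ b ∈ Set.Icc u v, ∀ t ∈ Set.Icc (0:ℝ) 1,
      t ^ s * |f' a| ^ q + (1 - t) ^ s * |f' b| ^ q ≤ |f' (t * a + (1 - t) * b)| ^ q)
    (x : ℝ) (hx : x ∈ Set.Icc u v) :
    |((v - x) * (v * f v - u * f x) + (x - u) * (v * f x - u * f u)) / (v - u) ^ 2
        - (1 / (v - u)) * ∫ μ in u..v, f μ|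
      ≤ ((2:ℝ) ^ ((s - 1) / q) *
            ((v ^ (p + 1) - u ^ (p + 1)) / ((p + 1) * (v - u))) ^ (1 / p) / (v - u) ^ 2) *
          ((v - x) ^ 2 * |f' ((x + v) / 2)| + (x - u) ^ 2 * |f' ((x + u) / 2)|) := by
  have hpq' : p.HolderConjugate q :=
    (Real.holderConjugate_iff.2 ⟨hq, by simpa only [one_div, add_comm] using hpq⟩).symm
  have hderiv' : ∀ y ∈ Icc u v, HasDerivAt f (f' y) y := fun y hy =>
    hderiv y (by rw [interior_Ici]; exact hu.trans_le hy.1)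
  have piece := fun a b (hua : u ≤ a) (hab : a ≤ b) (hbv : b ≤ v) =>
    have hsub : Icc a b ⊆ Icc u v := Icc_subset_Icc hua hbv
    abs_mul_sub_mul_integral_le hpq' hu.le huv hab (fun y hy => hderiv' y (hsub hy))
      (hint.mono_set (by rwa [uIcc_of_le hab, uIcc_of_le huv.le]))
      (SConcaveOn.subset (g := fun y => |f' y| ^ q) hsconc hsub)
  have hfint : ∀ a b, u ≤ a → a ≤ b → b ≤ v → IntervalIntegrable f volume a b :=
    fun a b hua hab hbv => ContinuousOn.intervalIntegrable fun y hy =>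
      (hderiv' y (Icc_subset_Icc hua hbv (uIcc_of_le hab ▸ hy))).continuousAt.continuousWithinAt
  have hsplit := intervalIntegral.integral_add_adjacent_intervals
    (hfint u x le_rfl hx.1 hx.2) (hfint x v hx.1 hx.2 le_rfl)
  have hvu : v - u ≠ 0 := sub_ne_zero.2 huv.ne'
  have hE : ((v - x) * (v * f v - u * f x) + (x - u) * (v * f x - u * f u)) / (v - u) ^ 2
        - (1 / (v - u)) * ((∫ μ in u..x, f μ) + ∫ μ in x..v, f μ)
      = (((x - u) * (v * f x - u * f u) - (v - u) * ∫ μ in u..x, f μ)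
          + ((v - x) * (v * f v - u * f x) - (v - u) * ∫ μ in x..v, f μ)) / (v - u) ^ 2 := by
    field_simp
    ring
  have hvu2 : 0 < (v - u) ^ 2 := pow_pos (sub_pos.2 huv) 2
  rw [← hsplit, hE, abs_div, abs_of_pos hvu2, div_le_iff₀ hvu2]
  calc _ ≤ _ := (abs_add_le _ _).trans (add_le_add (piece u x le_rfl hx.1 hx.2)
          (piece x v hx.1 hx.2 le_rfl))
    _ = _ := by rw [add_comm u x]; field_simp; ring

theorem stmt_16 (f f' : ℝ → ℝ) (u v p q s : ℝ) (hu : 0 < u) (huv : u < v)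
    (hq : 1 < q) (hpq : 1 / p + 1 / q = 1) (hs0 : 0 < s) (hs1 : s ≤ 1)
    (hderiv : ∀ y ∈ interior (Set.Ici (0:ℝ)), HasDerivAt f (f' y) y)
    (hint : IntervalIntegrable f' MeasureTheory.volume u v)
    (hsconc : ∀ a ∈ Set.Icc u v, ∀ b ∈ Set.Icc u v, ∀ t ∈ Set.Icc (0:ℝ) 1,
      t ^ s * |f' a| ^ q + (1 - t) ^ s * |f' b| ^ q ≤ |f' (t * a + (1 - t) * b)| ^ q)
    (x : ℝ) (hx : x ∈ Set.Icc u v) :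
    |((v - x) * (v * f v - u * f x) + (x - u) * (v * f x - u * f u)) / (v - u) ^ 2
        - (1 / (v - u)) * ∫ μ in u..v, f μ|
      ≤ ((2:ℝ) ^ ((s - 1) / q) *
            ((v ^ (p + 1) - u ^ (p + 1)) / ((p + 1) * (v - u))) ^ (1 / p) / (v - u) ^ 2) *
          ((v - x) ^ 2 * |f' ((x + v) / 2)| + (x - u) ^ 2 * |f' ((x + u) / 2)|) :=
  stmt_16_general f f' u v p q s hu huv hq hpq hderiv hint hsconc x hx
end

section
/- Let J = [0,∞) and let f : J → ℝ be differentiable on the interior of J with f' integrable on [u,v], where u, v ∈ J and 0 < u < v. Let q > 1 and p satisfy 1/p + 1/q = 1. If |f'|^q is concave on [u,v], then for every x ∈ [u,v]: |((v-x)(v·f(v) - u·f(x)) + (x-u)(v·f(x) - u·f(u)))/(v-u)² - (1/(v-u))·∫_u^v f(μ) dμ| ≤ (L_p(u,v)/(v-u)²)·[(v-x)²·|f'((x+v)/2)| + (x-u)²·|f'((x+u)/2)|]. -/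
/-! Integrating by parts against the affine kernel `m t = (v - u) t - (a v - b u)`, which takes the
values `u (b - a)` at `a` and `v (b - a)` at `b`, turns `(v - u)²` times the left-hand side into
`∫_u^x m f' + ∫_x^v m f'` for the kernels of `[u, x]` and `[x, v]`. On each piece Hölder's
inequality gives `|∫_a^b m f'| ≤ (∫ m^p)^{1/p} (∫ |f'|^q)^{1/q}`; the first factor is
`(b - a)^{(p+1)/p} L_p(u, v)` by direct integration, and the second is at most
`(b - a)^{1/q} |f'((a + b)/2)|` by the Hermite–Hadamard inequality for the concave `|f'|^q`. -/

open MeasureTheory Set intervalIntegral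

noncomputable def genLogMean (p u v : ℝ) : ℝ :=
  ((v ^ (p + 1) - u ^ (p + 1)) / ((p + 1) * (v - u))) ^ (1 / p)

theorem ConcaveOn.add_apply_reflect_le {g : ℝ → ℝ} {a b t : ℝ} (hg : ConcaveOn ℝ (Icc a b) g)
    (ht : t ∈ Icc a b) : g t + g (a + b - t) ≤ 2 * g ((a + b) / 2) := by
  have h := hg.2 ht (y := a + b - t) ⟨by linarith [ht.2], by linarith [ht.1]⟩
    (by norm_num : (0 : ℝ) ≤ 1 / 2) (by norm_num : (0 : ℝ) ≤ 1 / 2) (by norm_num)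
  rw [smul_eq_mul, smul_eq_mul, smul_eq_mul, smul_eq_mul,
    show 1 / 2 * t + 1 / 2 * (a + b - t) = (a + b) / 2 by ring] at h
  linarith

theorem ConcaveOn.integral_le_mul_midpoint {g : ℝ → ℝ} {a b : ℝ} (hg : ConcaveOn ℝ (Icc a b) g)
    (hab : a ≤ b) (hint : IntervalIntegrable g volume a b) :
    ∫ t in a..b, g t ≤ (b - a) * g ((a + b) / 2) := by
  have hint_refl : IntervalIntegrable (fun t => g (a + b - t)) volume a b := by
    simpa using (hint.comp_sub_left (a + b)).symm
  have h_refl : ∫ t in a..b, g (a + b - t) = ∫ t in a..b, g t := by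
    rw [integral_comp_sub_left g (a + b)]
    simp
  have h := integral_mono_on hab (hint.add hint_refl) intervalIntegrable_const
    fun t ht => hg.add_apply_reflect_le ht
  rw [integral_add hint hint_refl, h_refl, intervalIntegral.integral_const, smul_eq_mul] at h
  linarith

theorem abs_integral_mul_le_Lp_mul_Lq {p q a b : ℝ} {w φ : ℝ → ℝ} (hpq : p.HolderConjugate q)
    (hab : a ≤ b) (hw : ∀ t ∈ Icc a b, 0 ≤ w t) (hw_cont : ContinuousOn w (Icc a b))
    (hφ : MemLp φ (ENNReal.ofReal q) (volume.restrict (Ioc a b))) :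
    |∫ t in a..b, w t * φ t|
      ≤ (∫ t in a..b, w t ^ p) ^ (1 / p) * (∫ t in a..b, |φ t| ^ q) ^ (1 / q) := by
  have hIoc : Ioc a b ⊆ Icc a b := Ioc_subset_Icc_self
  obtain ⟨C, hC⟩ := isCompact_Icc.exists_bound_of_continuousOn hw_cont
  have hw_mem : MemLp w (ENNReal.ofReal p) (volume.restrict (Ioc a b)) := by
    refine MemLp.of_bound ((hw_cont.mono hIoc).aestronglyMeasurable measurableSet_Ioc) C ?_
    filter_upwards [ae_restrict_mem measurableSet_Ioc] with t ht using hC t (hIoc ht)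
  simp only [integral_of_le hab]
  calc |∫ t in Ioc a b, w t * φ t|
      ≤ ∫ t in Ioc a b, |w t * φ t| := abs_integral_le_integral_abs
    _ = ∫ t in Ioc a b, w t * |φ t| := setIntegral_congr_fun measurableSet_Ioc fun t ht => by
        rw [abs_mul, abs_of_nonneg (hw t (hIoc ht))]
    _ ≤ _ := integral_mul_le_Lp_mul_Lq_of_nonneg hpq
        (by filter_upwards [ae_restrict_mem measurableSet_Ioc] with t ht using hw t (hIoc ht))
        (Filter.Eventually.of_forall fun t => abs_nonneg _) hw_mem hφ.abs

theorem integral_kernel_rpow {u v a b p : ℝ} (hu : 0 ≤ u) (huv : u < v) (hab : a ≤ b)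
    (hp : -1 < p) :
    ∫ t in a..b, ((v - u) * t - (a * v - b * u)) ^ p
      = (b - a) ^ (p + 1) * ((v ^ (p + 1) - u ^ (p + 1)) / ((p + 1) * (v - u))) := by
  have hvu : v - u ≠ 0 := by linarith
  have hp1 : p + 1 ≠ 0 := by linarith
  simp only [sub_eq_add_neg ((v - u) * _)]
  rw [integral_comp_mul_add (fun x => x ^ p) hvu, integral_rpow (Or.inl hp),
    show (v - u) * a + -(a * v - b * u) = u * (b - a) by ring,
    show (v - u) * b + -(a * v - b * u) = v * (b - a) by ring,
    Real.mul_rpow hu (by linarith), Real.mul_rpow (by linarith) (by linarith), smul_eq_mul]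
  field_simp

theorem rpow_add_one_mul_rpow_mul_of_holderConjugate {p q s K N : ℝ}
    (hpq : p.HolderConjugate q) (hs : 0 ≤ s) (hK : 0 ≤ K) (hN : 0 ≤ N) :
    (s ^ (p + 1) * K) ^ (1 / p) * (s * N ^ q) ^ (1 / q) = K ^ (1 / p) * (s ^ 2 * N) := by
  have hexp : (p + 1) * (1 / p) + 1 / q = 2 := by
    rw [add_mul, mul_one_div_cancel hpq.ne_zero, one_mul, one_div, one_div, add_assoc,
      hpq.inv_add_inv_eq_one]
    norm_num
  rw [Real.mul_rpow (by positivity) hK, Real.mul_rpow hs (by positivity), ← Real.rpow_mul hs,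
    one_div q, Real.rpow_rpow_inv hN hpq.symm.ne_zero, ← one_div]
  calc _ = K ^ (1 / p) * (s ^ ((p + 1) * (1 / p)) * s ^ (1 / q) * N) := by ring
    _ = _ := by rw [← Real.rpow_add' hs (by rw [hexp]; norm_num), hexp, Real.rpow_two]

theorem abs_integral_kernel_mul_le {f' : ℝ → ℝ} {u v a b p q : ℝ} (hu : 0 ≤ u) (huv : u < v)
    (hab : a ≤ b) (hpq : p.HolderConjugate q)
    (hconc : ConcaveOn ℝ (Icc a b) fun t => |f' t| ^ q)
    (hf' : IntervalIntegrable f' volume a b) :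
    |∫ t in a..b, ((v - u) * t - (a * v - b * u)) * f' t|
      ≤ genLogMean p u v * ((b - a) ^ 2 * |f' ((a + b) / 2)|) := by
  have hq : 0 < q := hpq.symm.pos
  have hf'_meas : AEStronglyMeasurable f' (volume.restrict (Ioc a b)) :=
    hf'.1.aestronglyMeasurable
  -- `|f'|^q ≥ 0` is concave, so it is bounded by twice its value at the midpoint.
  have hg_int : IntegrableOn (fun t => |f' t| ^ q) (Ioc a b) := by
    refine .of_bound measure_Ioc_lt_top
      (hf'_meas.norm.aemeasurable.pow_const q).aestronglyMeasurable (2 * |f' ((a + b) / 2)| ^ q) ?_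
    filter_upwards [ae_restrict_mem measurableSet_Ioc] with t ht
    have hrefl := hconc.add_apply_reflect_le (Ioc_subset_Icc_self ht)
    rw [Real.norm_eq_abs, abs_of_nonneg (by positivity)]
    linarith [Real.rpow_nonneg (abs_nonneg (f' (a + b - t))) q]
  have hf'_mem : MemLp f' (ENNReal.ofReal q) (volume.restrict (Ioc a b)) := by
    refine (integrable_norm_rpow_iff hf'_meas (by simpa using hq) ENNReal.ofReal_ne_top).1 ?_
    simpa [ENNReal.toReal_ofReal hq.le, IntegrableOn] using hg_int
  have hK : 0 ≤ (v ^ (p + 1) - u ^ (p + 1)) / ((p + 1) * (v - u)) := by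
    have := Real.rpow_le_rpow hu huv.le (by linarith [hpq.pos] : 0 ≤ p + 1)
    exact div_nonneg (by linarith) (mul_nonneg (by linarith [hpq.pos]) (by linarith))
  calc |∫ t in a..b, ((v - u) * t - (a * v - b * u)) * f' t|
      ≤ (∫ t in a..b, ((v - u) * t - (a * v - b * u)) ^ p) ^ (1 / p)
          * (∫ t in a..b, |f' t| ^ q) ^ (1 / q) :=
        abs_integral_mul_le_Lp_mul_Lq hpq hab (fun t ht => by nlinarith [ht.1, ht.2])
          (by fun_prop) hf'_mem
    _ ≤ ((b - a) ^ (p + 1) * ((v ^ (p + 1) - u ^ (p + 1)) / ((p + 1) * (v - u)))) ^ (1 / p)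
          * ((b - a) * |f' ((a + b) / 2)| ^ q) ^ (1 / q) := by
        rw [integral_kernel_rpow hu huv hab (by linarith [hpq.pos])]
        gcongr
        · exact integral_nonneg hab fun t _ => by positivity
        · exact hconc.integral_le_mul_midpoint hab
            ((intervalIntegrable_iff_integrableOn_Ioc_of_le hab).2 hg_int)
    _ = genLogMean p u v * ((b - a) ^ 2 * |f' ((a + b) / 2)|) :=
        rpow_add_one_mul_rpow_mul_of_holderConjugate hpq (by linarith) hK (abs_nonneg _)

theorem integral_kernel_mul_deriv {f f' : ℝ → ℝ} {u v a b : ℝ}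
    (hf : ∀ t ∈ uIcc a b, HasDerivAt f (f' t) t) (hf' : IntervalIntegrable f' volume a b) :
    ∫ t in a..b, ((v - u) * t - (a * v - b * u)) * f' t
      = v * (b - a) * f b - u * (b - a) * f a - (v - u) * ∫ t in a..b, f t := by
  have hkernel : ∀ t ∈ uIcc a b,
      HasDerivAt (fun t => (v - u) * t - (a * v - b * u)) (v - u) t := fun t _ => by
    simpa using ((hasDerivAt_id t).const_mul (v - u)).sub_const (a * v - b * u)
  rw [integral_mul_deriv_eq_deriv_mul hkernel hf intervalIntegrable_const hf',
    intervalIntegral.integral_const_mul]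
  ring

theorem sub_average_eq_integral_kernel_mul_deriv {f f' : ℝ → ℝ} {u v x : ℝ} (huv : u < v)
    (hx : x ∈ Icc u v) (hf : ∀ y ∈ Icc u v, HasDerivAt f (f' y) y)
    (hf' : IntervalIntegrable f' volume u v) :
    ((v - x) * (v * f v - u * f x) + (x - u) * (v * f x - u * f u)) / (v - u) ^ 2
        - (1 / (v - u)) * ∫ t in u..v, f t
      = ((∫ t in u..x, ((v - u) * t - (u * v - x * u)) * f' t)
          + ∫ t in x..v, ((v - u) * t - (x * v - v * u)) * f' t) / (v - u) ^ 2 := by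
  have hf_int : IntervalIntegrable f volume u v :=
    ContinuousOn.intervalIntegrable_of_Icc huv.le fun y hy =>
      (hf y hy).continuousAt.continuousWithinAt
  have hsub_left : uIcc u x ⊆ uIcc u v := uIcc_subset_uIcc_left (Icc_subset_uIcc hx)
  have hsub_right : uIcc x v ⊆ uIcc u v := uIcc_subset_uIcc_right (Icc_subset_uIcc hx)
  have hderiv : ∀ t ∈ uIcc u v, HasDerivAt f (f' t) t := by
    simpa [uIcc_of_le huv.le] using hf
  rw [integral_kernel_mul_deriv (fun t ht => hderiv t (hsub_left ht)) (hf'.mono_set hsub_left),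
    integral_kernel_mul_deriv (fun t ht => hderiv t (hsub_right ht)) (hf'.mono_set hsub_right),
    ← integral_add_adjacent_intervals (hf_int.mono_set hsub_left) (hf_int.mono_set hsub_right)]
  have : v - u ≠ 0 := by linarith
  field_simp
  ring

theorem stmt_17 (f f' : ℝ → ℝ) (u v p q : ℝ) (hu : 0 < u) (huv : u < v)
    (hq : 1 < q) (hpq : 1 / p + 1 / q = 1)
    (hderiv : ∀ y ∈ interior (Set.Ici (0:ℝ)), HasDerivAt f (f' y) y)
    (hint : IntervalIntegrable f' MeasureTheory.volume u v)
    (hconc : ∀ a ∈ Set.Icc u v, ∀ b ∈ Set.Icc u v, ∀ t ∈ Set.Icc (0:ℝ) 1,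
      t * |f' a| ^ q + (1 - t) * |f' b| ^ q ≤ |f' (t * a + (1 - t) * b)| ^ q)
    (x : ℝ) (hx : x ∈ Set.Icc u v) :
    |((v - x) * (v * f v - u * f x) + (x - u) * (v * f x - u * f u)) / (v - u) ^ 2
        - (1 / (v - u)) * ∫ μ in u..v, f μ|
      ≤ (((v ^ (p + 1) - u ^ (p + 1)) / ((p + 1) * (v - u))) ^ (1 / p) / (v - u) ^ 2) *
          ((v - x) ^ 2 * |f' ((x + v) / 2)| + (x - u) ^ 2 * |f' ((x + u) / 2)|) := by
  have hpq' : p.HolderConjugate q :=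
    (Real.holderConjugate_iff.2 ⟨hq, by simpa only [one_div, add_comm] using hpq⟩).symm
  have hf : ∀ y ∈ Icc u v, HasDerivAt f (f' y) y := fun y hy =>
    hderiv y (by rw [interior_Ici]; exact hu.trans_le hy.1)
  have hg : ConcaveOn ℝ (Icc u v) fun t => |f' t| ^ q := by
    refine ⟨convex_Icc u v, fun a ha b hb s t hs ht hst => ?_⟩
    obtain rfl : t = 1 - s := by linarith
    simpa only [smul_eq_mul] using hconc a ha b hb s ⟨hs, by linarith⟩
  have hsub_left : uIcc u x ⊆ uIcc u v := uIcc_subset_uIcc_left (Icc_subset_uIcc hx)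
  have hsub_right : uIcc x v ⊆ uIcc u v := uIcc_subset_uIcc_right (Icc_subset_uIcc hx)
  have k₁ := abs_integral_kernel_mul_le hu.le huv hx.1 hpq'
    (hg.subset (Icc_subset_Icc_right hx.2) (convex_Icc _ _)) (hint.mono_set hsub_left)
  have k₂ := abs_integral_kernel_mul_le hu.le huv hx.2 hpq'
    (hg.subset (Icc_subset_Icc_left hx.1) (convex_Icc _ _)) (hint.mono_set hsub_right)
  have hvu2 : 0 < (v - u) ^ 2 := pow_pos (sub_pos.2 huv) 2
  rw [sub_average_eq_integral_kernel_mul_deriv huv hx hf hint, abs_div, abs_of_pos hvu2,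
    div_le_iff₀ hvu2]
  calc _ ≤ _ := abs_add_le _ _
    _ ≤ _ := add_le_add k₁ k₂
    _ = genLogMean p u v / (v - u) ^ 2
          * ((v - x) ^ 2 * |f' ((x + v) / 2)| + (x - u) ^ 2 * |f' ((x + u) / 2)|)
          * (v - u) ^ 2 := by
      rw [div_mul_eq_mul_div, div_mul_cancel₀ _ hvu2.ne', add_comm u x]
      ring
end
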